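/- Let H : ℝⁿ ⇉ ℝⁿ be a convex process and K ⊆ ℝⁿ a convex cone such that dom(H) − K is a linear subspace. Then (H(K))⁻ = (H⁻)⁻¹(K⁻). -/

import Mathlib

open Pointwise Set RealInnerProductSpace

namespace ConvexProcessPaper

/-- A convex cone: a nonempty convex set closed under nonnegative scalar multiplication. -/
def IsConvexCone {V : Type*} [AddCommMonoid V] [Module ℝ V] (S : Set V) : Prop :=
  S.Nonempty ∧ Convex ℝ S ∧ ∀ c : ℝ, 0 ≤ c → ∀ x ∈ S, c • x ∈ S

/-- A set is a linear subspace. -/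
def IsLinearSubspace {V : Type*} [AddCommGroup V] [Module ℝ V] (S : Set V) : Prop :=
  ∃ W : Submodule ℝ V, (W : Set V) = S

/-- Set-valued maps from ℝⁿ to ℝⁿ. -/
abbrev SVMap (n : ℕ) := EuclideanSpace ℝ (Fin n) → Set (EuclideanSpace ℝ (Fin n))

variable {n : ℕ}

/-- The graph of a set-valued map. -/
def graph (H : SVMap n) : Set (EuclideanSpace ℝ (Fin n) × EuclideanSpace ℝ (Fin n)) :=
  {p | p.2 ∈ H p.1}

/-- A convex process: a set-valued map whose graph is a convex cone. -/
def IsConvexProcess (H : SVMap n) : Prop := IsConvexCone (graph H)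

/-- The domain of a set-valued map. -/
def dom (H : SVMap n) : Set (EuclideanSpace ℝ (Fin n)) := {x | (H x).Nonempty}

/-- The image of a set-valued map. -/
def im (H : SVMap n) : Set (EuclideanSpace ℝ (Fin n)) := {y | ∃ x, y ∈ H x}

/-- The inverse of a set-valued map: gr(H⁻¹) = {(y,x) : (x,y) ∈ gr(H)}. -/
def invMap (H : SVMap n) : SVMap n := fun y => {x | y ∈ H x}

/-- The image of a set under a set-valued map: H(S) = ⋃_{x ∈ S} H(x). -/
def imSet (H : SVMap n) (S : Set (EuclideanSpace ℝ (Fin n))) :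
    Set (EuclideanSpace ℝ (Fin n)) := ⋃ x ∈ S, H x

/-- The reachable set: R(H) = ⋃_{ℓ ≥ 0} H^ℓ({0}). -/
def reach (H : SVMap n) : Set (EuclideanSpace ℝ (Fin n)) := ⋃ ℓ : ℕ, (imSet H)^[ℓ] {0}

/-- The null-controllable set: N(H) = R(H⁻¹). -/
def nullc (H : SVMap n) : Set (EuclideanSpace ℝ (Fin n)) := reach (invMap H)

/-- The feasible set: states from which an infinite trajectory emanates. -/
def feas (H : SVMap n) : Set (EuclideanSpace ℝ (Fin n)) :=
  {ξ | ∃ x : ℕ → EuclideanSpace ℝ (Fin n), x 0 = ξ ∧ ∀ k, x (k + 1) ∈ H (x k)}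

/-- The minimal linear process L₋: gr(L₋) = lin(gr(H)) = gr(H) ∩ (−gr(H)). -/
def Lminus (H : SVMap n) : SVMap n := fun x => {y | y ∈ H x ∧ -y ∈ H (-x)}

/-- The maximal linear process L₊: gr(L₊) = Lin(gr(H)) = gr(H) − gr(H). -/
def Lplus (H : SVMap n) : SVMap n :=
  fun x => {y | ∃ x₁ y₁ x₂ y₂, y₁ ∈ H x₁ ∧ y₂ ∈ H x₂ ∧ x = x₁ - x₂ ∧ y = y₁ - y₂}

/-- The negative dual process: p ∈ H⁻(q) ⇔ ⟨p,x⟩ ≥ ⟨q,y⟩ for all (x,y) ∈ gr(H). -/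
def negDual (H : SVMap n) : SVMap n :=
  fun q => {p | ∀ x y, y ∈ H x → ⟪q, y⟫ ≤ ⟪p, x⟫}

/-- The positive dual process: p ∈ H⁺(q) ⇔ ⟨p,x⟩ ≤ ⟨q,y⟩ for all (x,y) ∈ gr(H). -/
def posDual (H : SVMap n) : SVMap n :=
  fun q => {p | ∀ x y, y ∈ H x → ⟪p, x⟫ ≤ ⟪q, y⟫}

/-- The negative polar cone of a set. -/
def negPolar (C : Set (EuclideanSpace ℝ (Fin n))) : Set (EuclideanSpace ℝ (Fin n)) :=
  {y | ∀ x ∈ C, ⟪x, y⟫ ≤ 0}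

/-- The positive polar cone of a set. -/
def posPolar (C : Set (EuclideanSpace ℝ (Fin n))) : Set (EuclideanSpace ℝ (Fin n)) :=
  {y | ∀ x ∈ C, 0 ≤ ⟪x, y⟫}

/-- C is weakly H invariant: H(x) ∩ C ≠ ∅ for all x ∈ C. -/
def WeaklyInv (H : SVMap n) (C : Set (EuclideanSpace ℝ (Fin n))) : Prop :=
  ∀ x ∈ C, (H x ∩ C).Nonempty

/-- C is strongly H invariant: H(x) ⊆ C for all x ∈ C. -/
def StronglyInv (H : SVMap n) (C : Set (EuclideanSpace ℝ (Fin n))) : Prop :=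
  ∀ x ∈ C, H x ⊆ C

/-- H is reachable: every feasible state is reachable. -/
def IsReachable (H : SVMap n) : Prop := feas H ⊆ reach H

/-- H is null-controllable: every feasible state is null-controllable. -/
def IsNullControllable (H : SVMap n) : Prop := feas H ⊆ nullc H

/-!
For q ∈ (H(K))⁻ consider the convex cone C = {(x - k, ⟨q, y⟩) : y ∈ H x, k ∈ K} in ℝⁿ × ℝ. Its
projection to ℝⁿ is the subspace W = dom(H) - K, and q ∈ (H(K))⁻ says that C meets the line
{0} × ℝ only at nonpositive heights. Choosing a complement W' of W, the functional (u, t) ↦ -t on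
W' × ℝ is then nonnegative on C ∩ (W' × ℝ), and C + (W' × ℝ) is everything because W is all of the
projection of C. M. Riesz's extension theorem extends it to a linear functional nonnegative on
C, i.e. to a linear ℓ with t ≤ ℓ u on C, and the vector p representing ℓ lies in K⁻ ∩ H⁻(q).
-/

theorem IsConvexCone.zero_mem {V : Type*} [AddCommMonoid V] [Module ℝ V] {S : Set V}
    (hS : IsConvexCone S) : (0 : V) ∈ S := by
  obtain ⟨⟨x, hx⟩, -, hsmul⟩ := hS
  simpa using hsmul 0 le_rfl x hx

theorem IsConvexCone.add_mem {V : Type*} [AddCommMonoid V] [Module ℝ V] {S : Set V}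
    (hS : IsConvexCone S) {x y : V} (hx : x ∈ S) (hy : y ∈ S) : x + y ∈ S := by
  have hmid := hS.2.1 hx hy one_half_pos.le one_half_pos.le (add_halves 1)
  convert hS.2.2 2 zero_le_two _ hmid using 1
  rw [smul_add, smul_smul, smul_smul]
  norm_num

def IsConvexCone.toPointedCone {V : Type*} [AddCommMonoid V] [Module ℝ V] {S : Set V}
    (hS : IsConvexCone S) : PointedCone ℝ V where
  carrier := S
  zero_mem' := hS.zero_mem
  add_mem' := hS.add_mem
  smul_mem' c _ hx := hS.2.2 c c.2 _ hx

theorem _root_.PointedCone.exists_linearMap_snd_le {E : Type*} [AddCommGroup E] [Module ℝ E]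
    (C : PointedCone ℝ (E × ℝ)) (W : Submodule ℝ E) (hC : Prod.fst '' (C : Set (E × ℝ)) = W)
    (hzero : ∀ t : ℝ, ((0 : E), t) ∈ C → t ≤ 0) :
    ∃ ℓ : E →ₗ[ℝ] ℝ, ∀ p ∈ C, p.2 ≤ ℓ p.1 := by
  obtain ⟨W', hWW'⟩ := Submodule.exists_isCompl W
  set f := (-LinearMap.snd ℝ E ℝ).toPMap (W'.prod ⊤)
  have hnonneg : ∀ x : f.domain, (x : E × ℝ) ∈ C → 0 ≤ f x := by
    rintro ⟨⟨u, t⟩, hu, -⟩ (hut : (u, t) ∈ C)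
    have huW : u ∈ W := by
      rw [← SetLike.mem_coe, ← hC]
      exact ⟨(u, t), hut, rfl⟩
    obtain rfl : u = 0 := Submodule.disjoint_def.1 hWW'.disjoint u huW hu
    simpa [f] using hzero t hut
  have hdense : ∀ y, ∃ x : f.domain, (x : E × ℝ) + y ∈ C := by
    rintro ⟨u, t⟩
    obtain ⟨v, hv, w, hw, rfl⟩ :=
      Submodule.mem_sup.1 (hWW'.sup_eq_top ▸ Submodule.mem_top : u ∈ W ⊔ W')
    obtain ⟨⟨v, s⟩, hvs, rfl⟩ : v ∈ Prod.fst '' (C : Set (E × ℝ)) := hC ▸ hv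
    refine ⟨⟨(-w, s - t), W'.neg_mem hw, trivial⟩, ?_⟩
    convert hvs using 1
    simp
  obtain ⟨g, hgf, hgC⟩ := riesz_extension C f hnonneg hdense
  refine ⟨g.comp (LinearMap.inl ℝ E ℝ), fun p hp => ?_⟩
  have hg01 : g (0, 1) = -1 := by simpa [f] using hgf ⟨(0, 1), W'.zero_mem, trivial⟩
  have hsplit : g p = g (p.1, 0) + p.2 * g (0, 1) := by
    rw [← smul_eq_mul, ← map_smul, ← map_add]
    simp
  have hgp := hgC p hp
  simp only [LinearMap.comp_apply, LinearMap.inl_apply]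
  rw [hsplit, hg01] at hgp
  linarith

theorem exists_linearMap_of_image_nonpos {E F : Type*} [AddCommGroup E] [Module ℝ E]
    [AddCommGroup F] [Module ℝ F] (G : PointedCone ℝ (E × F)) (K : PointedCone ℝ E)
    (W : Submodule ℝ E) (hW : Prod.fst '' (G : Set (E × F)) - K = W) (φ : F →ₗ[ℝ] ℝ)
    (hφ : ∀ x y, (x, y) ∈ G → x ∈ K → φ y ≤ 0) :
    ∃ ℓ : E →ₗ[ℝ] ℝ, (∀ k ∈ K, ℓ k ≤ 0) ∧ ∀ x y, (x, y) ∈ G → φ y ≤ ℓ x := by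
  set L : (E × F) × E →ₗ[ℝ] E × ℝ := (LinearMap.id.prodMap φ).coprod (-LinearMap.inl ℝ E ℝ)
  have hL : ∀ x y k, L ((x, y), k) = (x - k, φ y) := by
    intro x y k
    simp [L, sub_eq_add_neg]
  have hmem : ∀ x y k, (x, y) ∈ G → k ∈ K → (x - k, φ y) ∈ PointedCone.map L (G.prod K) :=
    fun x y k hxy hk => PointedCone.mem_map.2 ⟨((x, y), k), ⟨hxy, hk⟩, hL x y k⟩
  have himage : Prod.fst '' (PointedCone.map L (G.prod K) : Set (E × ℝ)) = W := by
    rw [← hW]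
    ext u
    constructor
    · rintro ⟨c, hc, rfl⟩
      obtain ⟨⟨⟨x, y⟩, k⟩, ⟨hxy, hk⟩, rfl⟩ := PointedCone.mem_map.1 hc
      exact ⟨x, ⟨(x, y), hxy, rfl⟩, k, hk, by simp [hL]⟩
    · rintro ⟨-, ⟨⟨x, y⟩, hxy, rfl⟩, k, hk, rfl⟩
      exact ⟨_, hmem x y k hxy hk, rfl⟩
  have hzero : ∀ t : ℝ, ((0 : E), t) ∈ PointedCone.map L (G.prod K) → t ≤ 0 := by
    intro t ht
    obtain ⟨⟨⟨x, y⟩, k⟩, ⟨hxy, hk⟩, he⟩ := PointedCone.mem_map.1 ht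
    rw [hL, Prod.mk.injEq, sub_eq_zero] at he
    obtain ⟨rfl, rfl⟩ := he
    exact hφ x y hxy hk
  obtain ⟨ℓ, hℓ⟩ := PointedCone.exists_linearMap_snd_le _ W himage hzero
  refine ⟨ℓ, fun k hk => ?_, fun x y hxy => ?_⟩
  · simpa using hℓ _ (hmem 0 0 k G.zero_mem hk)
  · simpa using hℓ _ (hmem x y 0 hxy K.zero_mem)

theorem fst_image_graph (H : SVMap n) : Prod.fst '' graph H = dom H :=
  Set.ext fun x => ⟨fun ⟨⟨_, y⟩, hy, hx⟩ => hx ▸ ⟨y, hy⟩, fun ⟨y, hy⟩ => ⟨(x, y), hy, rfl⟩⟩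

theorem imSet_invMap_negDual_subset (H : SVMap n) (K : Set (EuclideanSpace ℝ (Fin n))) :
    imSet (invMap (negDual H)) (negPolar K) ⊆ negPolar (imSet H K) := by
  intro q hq y hy
  obtain ⟨p, hpK, hpq⟩ := Set.mem_iUnion₂.1 hq
  obtain ⟨x, hxK, hxy⟩ := Set.mem_iUnion₂.1 hy
  calc ⟪y, q⟫ = ⟪q, y⟫ := real_inner_comm _ _
    _ ≤ ⟪p, x⟫ := hpq x y hxy
    _ = ⟪x, p⟫ := real_inner_comm _ _
    _ ≤ 0 := hpK x hxK

theorem negPolar_imSet_subset {H : SVMap n} (hH : IsConvexProcess H)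
    {K : Set (EuclideanSpace ℝ (Fin n))} (hK : IsConvexCone K)
    (hsub : IsLinearSubspace (dom H - K)) :
    negPolar (imSet H K) ⊆ imSet (invMap (negDual H)) (negPolar K) := by
  intro q hq
  obtain ⟨W, hW⟩ := hsub
  have hGK : Prod.fst '' graph H - K = W := by rw [fst_image_graph, hW]
  have hqφ : ∀ x y, (x, y) ∈ hH.toPointedCone → x ∈ hK.toPointedCone → innerₛₗ ℝ q y ≤ 0 :=
    fun x y hxy hx => by
      simpa [real_inner_comm] using hq y (Set.mem_iUnion₂.2 ⟨x, hx, hxy⟩)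
  obtain ⟨ℓ, hℓK, hℓH⟩ := exists_linearMap_of_image_nonpos _ _ W hGK _ hqφ
  set p := (InnerProductSpace.toDual ℝ _).symm (LinearMap.toContinuousLinearMap ℓ)
  have hp : ∀ x, ⟪p, x⟫ = ℓ x := fun x => InnerProductSpace.toDual_symm_apply
  refine Set.mem_iUnion₂.2 ⟨p, fun k hk => ?_, fun x y hxy => ?_⟩
  · rw [real_inner_comm, hp]
    exact hℓK k hk
  · rw [hp]
    exact hℓH x y hxy

/-- (H(K))⁻ = (H⁻)⁻¹(K⁻) when dom(H) − K is a subspace. -/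
theorem image_negPolar {n : ℕ} (H : SVMap n) (hH : IsConvexProcess H)
    (K : Set (EuclideanSpace ℝ (Fin n))) (hK : IsConvexCone K)
    (hsub : IsLinearSubspace (dom H - K)) :
    negPolar (imSet H K) = imSet (invMap (negDual H)) (negPolar K) :=
  (negPolar_imSet_subset hH hK hsub).antisymm (imSet_invMap_negDual_subset H K)

end ConvexProcessPaper
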